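/- For any fixed f ∈ ℚ_p[x] with f(0) ≠ 0 and any ε > 0, there exist infinitely many irreducible polynomials g ∈ ℤ_p[x] such that (1) the Newton polygon of f ∘ g has the same number of segments as that of f, and (2) every root of f ∘ g in an algebraic closure of ℚ_p has p-adic valuation less than ε. -/

import Mathlib

/-- The lower convex hull of a set of points in `ℝ × (ℝ ∪ {∞})`: the points lying
within the vertical strip spanned by `S` and on or above every affine lower bound of `S`. -/
def LCH (S : Set (ℝ × EReal)) : Set (ℝ × EReal) :=
  {q | (∃ s ∈ S, s.1 ≤ q.1) ∧ (∃ s ∈ S, q.1 ≤ s.1) ∧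
    ∀ a b : ℝ, (∀ s ∈ S, ((a * s.1 + b : ℝ) : EReal) ≤ s.2) →
      ((a * q.1 + b : ℝ) : EReal) ≤ q.2}
open Polynomial

/- The `p`-adic valuation of an element of `ℚ_[p]`, with `ord_p 0 = ∞`. -/
open Classical in
noncomputable def ordp (p : ℕ) [Fact p.Prime] (x : ℚ_[p]) : EReal :=
  if x = 0 then ⊤ else ((x.valuation : ℝ) : EReal)

/-- The points `(i, ord_p a_i)` attached to a polynomial `f = Σ a_i x^i` over `ℚ_[p]`. -/
def NPpts {p : ℕ} [Fact p.Prime] (f : Polynomial ℚ_[p]) : Set (ℝ × EReal) :=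
  {q | ∃ i : ℕ, i ≤ f.natDegree ∧ q = ((i : ℝ), ordp p (f.coeff i))}

/-- The `p`-adic Newton polygon of `f`, as a region in the plane. -/
noncomputable def NP {p : ℕ} [Fact p.Prime] (f : Polynomial ℚ_[p]) : Set (ℝ × EReal) :=
  LCH (NPpts f)

/-- `f` is pure at `p` of slope `s`: its Newton polygon is the single segment from
`(0, ord_p a_0)` to `(natDegree f, ord_p a_0 + s · natDegree f)`. -/
def IsPure {p : ℕ} [Fact p.Prime] (f : Polynomial ℚ_[p]) (s : ℝ) : Prop :=
  f.coeff 0 ≠ 0 ∧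
  (∀ i ≤ f.natDegree,
    ((((f.coeff 0).valuation : ℝ) + s * i : ℝ) : EReal) ≤ ordp p (f.coeff i)) ∧
  ordp p (f.coeff f.natDegree)
    = ((((f.coeff 0).valuation : ℝ) + s * f.natDegree : ℝ) : EReal)

/-- `f` is `p^r`-pure: one segment, `ord_p a_0 = r` and `ord_p a_n = 0`. -/
def IsPrPure {p : ℕ} [Fact p.Prime] (f : Polynomial ℚ_[p]) (r : ℕ) : Prop :=
  1 ≤ f.natDegree ∧ (f.coeff 0).valuation = (r : ℤ) ∧
  IsPure f (-(r : ℝ) / f.natDegree)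

/-- The Newton polygon of `f` has exactly `N` segments, with vertices `(x j, y j)`:
the `x j` are strictly increasing from `0` to `deg f`, the valuations of the coefficients
at the vertices are the `y j`, the consecutive slopes are strictly increasing, and all
points `(i, ord_p a_i)` lie on or above the segment through the neighbouring vertices. -/
def HasNPVertices {p : ℕ} [Fact p.Prime] (f : Polynomial ℚ_[p]) (N : ℕ)
    (x : Fin (N + 1) → ℕ) (y : Fin (N + 1) → ℝ) : Prop :=
  x 0 = 0 ∧ x (Fin.last N) = f.natDegree ∧
  (∀ j : Fin N, x j.castSucc < x j.succ) ∧
  StrictMono (fun j : Fin N =>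
    (y j.succ - y j.castSucc) / ((x j.succ : ℝ) - (x j.castSucc : ℝ))) ∧
  (∀ j : Fin (N + 1), ordp p (f.coeff (x j)) = ((y j : ℝ) : EReal)) ∧
  (∀ j : Fin N, ∀ i : ℕ, x j.castSucc ≤ i → i ≤ x j.succ →
    (((y j.castSucc +
        (y j.succ - y j.castSucc) / ((x j.succ : ℝ) - (x j.castSucc : ℝ))
          * ((i : ℝ) - (x j.castSucc : ℝ))) : ℝ) : EReal) ≤ ordp p (f.coeff i))

/- We take `g = X ^ d + p ^ (d + 1)` for all large `d`. It is irreducible by Eisenstein after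
the substitution `X ↦ X / p`, and `f ∘ g = expand d (taylor (p ^ (d + 1)) f)`: the Taylor shift
by the small constant `p ^ (d + 1)` perturbs the coefficients of `f` too little to move the
vertices of its Newton polygon, and `expand d` stretches the polygon horizontally by `d`.
If `α` is a root of `f ∘ g` then `α ^ d + p ^ (d + 1)` is a root of `f`, hence of norm at least
some `c₀ > 0` depending only on `f`, so `‖α‖ ^ d ≥ c₀ - p ^ (-(d + 1)) > (p ^ (-ε)) ^ d`. -/
open Filter Topology Finset

universe u

lemma add_div_mul_sub_le_max {x₀ x₁ y₀ y₁ t : ℝ} (h₀ : x₀ ≤ t) (h₁ : t ≤ x₁) :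
    y₀ + (y₁ - y₀) / (x₁ - x₀) * (t - x₀) ≤ max y₀ y₁ := by
  have hs₀ : 0 ≤ (t - x₀) / (x₁ - x₀) := div_nonneg (by linarith) (by linarith)
  have hs₁ : (t - x₀) / (x₁ - x₀) ≤ 1 := div_le_one_of_le₀ (by linarith) (by linarith)
  rw [div_mul_comm]
  rcases le_total y₀ y₁ with h | h
  · rw [max_eq_right h]; nlinarith
  · rw [max_eq_left h]; nlinarith

lemma Set.infinite_of_injective_eventually_mem {α : Type*} {s : Set α} {G : ℕ → α}
    (hG : G.Injective) (h : ∀ᶠ d in atTop, G d ∈ s) : s.Infinite :=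
  ((Nat.frequently_atTop_iff_infinite.mp h.frequently).image hG.injOn).mono
    (Set.image_subset_iff.mpr fun _ hd => hd)

section NormedField

variable {𝕜 : Type*} [NormedField 𝕜]

lemma comp_X_pow_add_C_eq_expand_taylor (f : 𝕜[X]) (d : ℕ) (c : 𝕜) :
    f.comp (X ^ d + C c) = expand 𝕜 d (taylor c f) := by
  rw [expand_eq_comp_X_pow, taylor_apply, comp_assoc, add_comp, X_comp, C_comp]

lemma norm_coeff_X_pow_add_C_le_one {d : ℕ} (hd : 0 < d) {c : 𝕜} (hc : ‖c‖ ≤ 1) (i : ℕ) :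
    ‖(X ^ d + C c : 𝕜[X]).coeff i‖ ≤ 1 := by
  rw [coeff_add, coeff_X_pow, coeff_C]
  split_ifs <;> simp_all

lemma eventually_forall_norm_coeff_taylor_sub_lt (f : 𝕜[X]) {δ : ℝ} (hδ : 0 < δ) :
    ∀ᶠ c in 𝓝 0, ∀ m, ‖(taylor c f).coeff m - f.coeff m‖ < δ := by
  have hcoeff : ∀ m, ∀ᶠ c in 𝓝 (0 : 𝕜), ‖(taylor c f).coeff m - f.coeff m‖ < δ := by
    intro m
    have hcont := (hasseDeriv m f).continuous.tendsto 0
    simp only [← taylor_coeff, taylor_zero] at hcont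
    simpa only [dist_eq_norm] using Metric.tendsto_nhds.mp hcont δ hδ
  filter_upwards [(eventually_all_finset (range (f.natDegree + 1))).mpr fun m _ => hcoeff m]
    with c hc m
  by_cases hm : m ≤ f.natDegree
  · exact hc m (mem_range.mpr (Nat.lt_succ_of_le hm))
  · have hlt : f.natDegree < m := not_le.mp hm
    rwa [coeff_eq_zero_of_natDegree_lt hlt,
      coeff_eq_zero_of_natDegree_lt ((natDegree_taylor f c).trans_lt hlt), sub_zero, norm_zero]

variable {K : Type*} [NormedField K] [NormedAlgebra 𝕜 K]

lemma norm_aeval_le_sum_norm_coeff (q : 𝕜[X]) {β : K} (hβ : ‖β‖ ≤ 1) :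
    ‖aeval β q‖ ≤ ∑ i ∈ range (q.natDegree + 1), ‖q.coeff i‖ := by
  rw [aeval_eq_sum_range]
  refine (norm_sum_le _ _).trans (sum_le_sum fun i _ => ?_)
  rw [norm_smul, norm_pow]
  exact mul_le_of_le_one_right (norm_nonneg _) (pow_le_one₀ (norm_nonneg _) hβ)

lemma exists_pos_le_norm_of_aeval_eq_zero {f : 𝕜[X]} (hf0 : f.coeff 0 ≠ 0) :
    ∃ c₀ > 0, ∀ (K : Type u) [NormedField K] [NormedAlgebra 𝕜 K] (β : K),
      aeval β f = 0 → c₀ ≤ ‖β‖ := by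
  set B := ∑ i ∈ range (f.divX.natDegree + 1), ‖f.divX.coeff i‖
  have hB : 0 ≤ B := sum_nonneg fun i _ => norm_nonneg _
  refine ⟨min 1 (‖f.coeff 0‖ / (B + 1)), lt_min one_pos (by positivity), ?_⟩
  intro K _ _ β hβ
  rcases le_total 1 ‖β‖ with h | h
  · exact (min_le_left _ _).trans h
  -- `f = X * f.divX + f(0)`, so `‖f(0)‖ = ‖β‖ ‖f.divX(β)‖` at a root `β`
  have hroot : aeval β f.divX * β = -algebraMap 𝕜 K (f.coeff 0) := by
    rw [eq_neg_iff_add_eq_zero, ← hβ]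
    conv_rhs => rw [← divX_mul_X_add f]
    simp only [map_add, map_mul, aeval_X, aeval_C]
  have hnorm : ‖f.coeff 0‖ ≤ B * ‖β‖ := by
    rw [← norm_algebraMap' K, ← norm_neg, ← hroot, norm_mul]
    exact mul_le_mul_of_nonneg_right (norm_aeval_le_sum_norm_coeff _ h) (norm_nonneg _)
  refine (min_le_right _ _).trans ((div_le_iff₀ (by positivity)).mpr ?_)
  nlinarith [norm_nonneg β]

lemma lt_norm_of_aeval_comp_X_pow_add_C_eq_zero {f : 𝕜[X]} {c₀ b : ℝ}
    (hf : ∀ β : K, aeval β f = 0 → c₀ ≤ ‖β‖) {d : ℕ} {c : 𝕜} (hbc : b ^ d + ‖c‖ < c₀)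
    {α : K} (hα : aeval α (f.comp (X ^ d + C c)) = 0) : b < ‖α‖ := by
  rw [aeval_comp] at hα
  have hβ := hf _ hα
  simp only [map_add, map_pow, aeval_X, aeval_C] at hβ
  have : c₀ ≤ ‖α‖ ^ d + ‖c‖ := by
    calc c₀ ≤ _ := hβ
      _ ≤ ‖α ^ d‖ + ‖algebraMap 𝕜 K c‖ := norm_add_le _ _
      _ = ‖α‖ ^ d + ‖c‖ := by rw [norm_pow, norm_algebraMap']
  exact lt_of_pow_lt_pow_left₀ d (norm_nonneg _) (by linarith)

end NormedField

section Padic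

variable {p : ℕ} [Fact p.Prime]

lemma one_lt_natCast_prime : (1 : ℝ) < p := by exact_mod_cast (Fact.out : p.Prime).one_lt

lemma Padic.norm_eq_rpow_neg_valuation {z : ℚ_[p]} (hz : z ≠ 0) :
    ‖z‖ = (p : ℝ) ^ (-(z.valuation : ℝ)) := by
  rw [Padic.norm_eq_zpow_neg_valuation hz, ← Real.rpow_intCast, Int.cast_neg]

lemma coe_le_ordp_iff {z : ℚ_[p]} {c : ℝ} : (c : EReal) ≤ ordp p z ↔ ‖z‖ ≤ (p : ℝ) ^ (-c) := by
  by_cases hz : z = 0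
  · simp [ordp, hz, Real.rpow_nonneg]
  · rw [ordp, if_neg hz, Padic.norm_eq_rpow_neg_valuation hz, EReal.coe_le_coe_iff,
      Real.rpow_le_rpow_left_iff one_lt_natCast_prime, neg_le_neg_iff]

lemma ordp_eq_coe_iff {z : ℚ_[p]} {c : ℝ} : ordp p z = c ↔ ‖z‖ = (p : ℝ) ^ (-c) := by
  by_cases hz : z = 0
  · simp [ordp, hz, (Real.rpow_pos_of_pos (zero_lt_one.trans one_lt_natCast_prime) _).ne]
  · rw [ordp, if_neg hz, Padic.norm_eq_rpow_neg_valuation hz, EReal.coe_eq_coe_iff,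
      Real.rpow_right_inj (zero_lt_one.trans one_lt_natCast_prime) one_lt_natCast_prime.ne',
      neg_inj]

end Padic

namespace HasNPVertices

variable {p : ℕ} [Fact p.Prime] {h : ℚ_[p][X]} {N : ℕ} {x : Fin (N + 1) → ℕ} {y : Fin (N + 1) → ℝ}

lemma norm_coeff_eq (hh : HasNPVertices h N x y) (j : Fin (N + 1)) :
    ‖h.coeff (x j)‖ = (p : ℝ) ^ (-y j) :=
  ordp_eq_coe_iff.mp (hh.2.2.2.2.1 j)

lemma of_norm_sub_lt (hh : HasNPVertices h N x y) {h' : ℚ_[p][X]}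
    (hdeg : h'.natDegree = h.natDegree)
    (hsmall : ∀ j i, ‖h'.coeff i - h.coeff i‖ < ‖h.coeff (x j)‖) :
    HasNPVertices h' N x y := by
  have hnorm := hh.norm_coeff_eq
  obtain ⟨hx0, hxlast, hxlt, hslope, -, hseg⟩ := hh
  refine ⟨hx0, hxlast.trans hdeg.symm, hxlt, hslope, fun j => ?_, fun j i hi₀ hi₁ => ?_⟩
  · rw [ordp_eq_coe_iff, Padic.norm_eq_of_norm_sub_lt_right (hsmall j _), hnorm]
  · have hi := hseg j i hi₀ hi₁
    rw [coe_le_ordp_iff] at hi ⊢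
    -- the segment lies below its higher endpoint, whose coefficient dominates the perturbation
    have hdiff : ‖h'.coeff i - h.coeff i‖ ≤ (p : ℝ) ^ (-(y j.castSucc +
        (y j.succ - y j.castSucc) / ((x j.succ : ℝ) - (x j.castSucc : ℝ)) *
          ((i : ℝ) - (x j.castSucc : ℝ)))) := by
      have hmax := add_div_mul_sub_le_max (y₀ := y j.castSucc) (y₁ := y j.succ)
        (Nat.cast_le.mpr hi₀) (Nat.cast_le.mpr hi₁)
      rcases le_max_iff.mp hmax with hL | hL
      · refine ((hsmall j.castSucc i).trans_le ?_).le
        rw [hnorm, Real.rpow_le_rpow_left_iff one_lt_natCast_prime]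
        linarith
      · refine ((hsmall j.succ i).trans_le ?_).le
        rw [hnorm, Real.rpow_le_rpow_left_iff one_lt_natCast_prime]
        linarith
    calc ‖h'.coeff i‖ = ‖(h'.coeff i - h.coeff i) + h.coeff i‖ := by rw [sub_add_cancel]
      _ ≤ _ := Padic.nonarchimedean _ _
      _ ≤ _ := max_le hdiff hi

lemma expand (hh : HasNPVertices h N x y) {d : ℕ} (hd : 0 < d) :
    HasNPVertices (expand ℚ_[p] d h) N (fun j => d * x j) y := by
  obtain ⟨hx0, hxlast, hxlt, hslope, hvert, hseg⟩ := hh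
  have hd' : (d : ℝ) ≠ 0 := Nat.cast_ne_zero.mpr hd.ne'
  have hscale : ∀ a b c : ℝ, a / (d * b - d * c) = a / (b - c) / d := fun a b c => by
    rw [← mul_sub, div_div, mul_comm]
  refine ⟨by simp [hx0], by simp [hxlast, natDegree_expand, mul_comm],
    fun j => Nat.mul_lt_mul_of_pos_left (hxlt j) hd, ?_, fun j => ?_, fun j i hi₀ hi₁ => ?_⟩
  · simpa only [Nat.cast_mul, hscale] using hslope.div_const (Nat.cast_pos.mpr hd)
  · rw [coeff_expand hd, if_pos (dvd_mul_right _ _), Nat.mul_div_cancel_left _ hd]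
    exact hvert j
  · rw [coeff_expand hd]
    split_ifs with hdvd
    · obtain ⟨m, rfl⟩ := hdvd
      rw [Nat.mul_div_cancel_left _ hd]
      convert hseg j m (Nat.le_of_mul_le_mul_left hi₀ hd) (Nat.le_of_mul_le_mul_left hi₁ hd)
        using 3
      push_cast
      rw [hscale, ← mul_sub, div_mul_eq_mul_div, mul_left_comm, mul_div_cancel_left₀ _ hd']
    · simp [ordp]

end HasNPVertices

section Irreducible

variable {p : ℕ} [Fact p.Prime]

lemma irreducible_X_pow_add_C_p {d : ℕ} (hd : 0 < d) : Irreducible (X ^ d + C (p : ℚ_[p])) := by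
  have hmonic : (X ^ d + C (p : ℤ_[p])).Monic := monic_X_pow_add_C _ hd.ne'
  have hmap : (X ^ d + C (p : ℤ_[p])).map (algebraMap ℤ_[p] ℚ_[p]) = X ^ d + C (p : ℚ_[p]) := by
    simp
  rw [← hmap, ← hmonic.irreducible_iff_irreducible_map_fraction_map]
  have hdeg : (X ^ d + C (p : ℤ_[p])).natDegree = d := natDegree_X_pow_add_C
  refine (hmonic.isEisensteinAt_of_mem_of_notMem (IsLocalRing.maximalIdeal.isMaximal _).ne_top
    (fun hn => ?_) ?_).irreducible (IsLocalRing.maximalIdeal.isMaximal _).isPrime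
    hmonic.isPrimitive (hdeg.symm ▸ hd)
  all_goals rw [PadicInt.maximalIdeal_eq_span_p]
  · rw [hdeg] at hn
    rw [coeff_add, coeff_X_pow, if_neg hn.ne, coeff_C, zero_add]
    split_ifs
    · exact Ideal.subset_span rfl
    · exact zero_mem _
  · rw [coeff_add, coeff_X_pow, if_neg hd.ne, coeff_C, if_pos rfl, zero_add,
      Ideal.span_singleton_pow, Ideal.mem_span_singleton]
    simpa using (pow_dvd_pow_iff PadicInt.prime_p.ne_zero PadicInt.prime_p.not_isUnit).not.mpr
      (by norm_num : ¬ 2 ≤ 1)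

lemma irreducible_X_pow_add_C_p_pow_succ {d : ℕ} (hd : 0 < d) :
    Irreducible (X ^ d + C ((p : ℚ_[p]) ^ (d + 1))) := by
  have hp : (p : ℚ_[p]) ≠ 0 := Nat.cast_ne_zero.mpr (Fact.out : p.Prime).ne_zero
  let _ := invertibleOfNonzero (inv_ne_zero hp)
  -- `X ^ d + p ^ (d + 1) = p ^ d * ((X / p) ^ d + p)`
  have hscale : X ^ d + C ((p : ℚ_[p]) ^ (d + 1))
      = C ((p : ℚ_[p]) ^ d) * algEquivCMulXAddC (p : ℚ_[p])⁻¹ 0 (X ^ d + C (p : ℚ_[p])) := by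
    simp only [algEquivCMulXAddC_apply, C_0, add_zero, map_add, map_pow, aeval_X, aeval_C,
      algebraMap_eq]
    rw [mul_add, mul_pow, ← mul_assoc, ← mul_pow, ← C_mul, mul_inv_cancel₀ hp, C_1, one_pow,
      one_mul, pow_succ]
  rw [hscale, irreducible_isUnit_mul (isUnit_C.mpr (pow_ne_zero d hp).isUnit),
    MulEquiv.irreducible_iff]
  exact irreducible_X_pow_add_C_p hd

end Irreducible

/-- For any fixed `f ∈ ℚ_p[x]` with `f(0) ≠ 0` whose Newton polygon has `N` segments, and
any `ε > 0`, there are infinitely many irreducible `g ∈ ℤ_p[x]` such that the Newton polygon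
of `f ∘ g` also has `N` segments, and every root of `f ∘ g` (in any normed extension of
`ℚ_p`, e.g. `ℚ̄_p`) has valuation `< ε`, i.e. norm `> p^{-ε}`. -/
theorem infinitely_many_stretching (p : ℕ) [Fact p.Prime]
    (f : Polynomial ℚ_[p]) (hf0 : f.coeff 0 ≠ 0)
    (N : ℕ) (x : Fin (N + 1) → ℕ) (y : Fin (N + 1) → ℝ)
    (hf : HasNPVertices f N x y) (ε : ℝ) (hε : 0 < ε) :
    {g : Polynomial ℚ_[p] |
      (∀ i, ‖g.coeff i‖ ≤ 1) ∧ Irreducible g ∧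
      (∃ (x' : Fin (N + 1) → ℕ) (y' : Fin (N + 1) → ℝ),
        HasNPVertices (f.comp g) N x' y') ∧
      (∀ (K : Type) [NormedField K] [NormedAlgebra ℚ_[p] K],
        ∀ α : K, Polynomial.aeval α (f.comp g) = 0 → (p : ℝ) ^ (-ε) < ‖α‖)}.Infinite := by
  set G : ℕ → ℚ_[p][X] := fun d => X ^ d + C ((p : ℚ_[p]) ^ (d + 1))
  have hG : G.Injective := fun d d' h => by
    simpa only [G, natDegree_X_pow_add_C] using congrArg natDegree h
  have hc : Tendsto (fun d : ℕ => (p : ℚ_[p]) ^ (d + 1)) atTop (𝓝 0) :=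
    (tendsto_pow_atTop_nhds_zero_of_norm_lt_one Padic.norm_p_lt_one).comp (tendsto_add_atTop_nat 1)
  have hb : Tendsto (fun d : ℕ => ((p : ℝ) ^ (-ε)) ^ d + ‖(p : ℚ_[p]) ^ (d + 1)‖) atTop (𝓝 0) := by
    simpa using (tendsto_pow_atTop_nhds_zero_of_lt_one (Real.rpow_nonneg (Nat.cast_nonneg p) _)
      (Real.rpow_lt_one_of_one_lt_of_neg one_lt_natCast_prime (neg_neg_of_pos hε))).add hc.norm
  obtain ⟨c₀, hc₀, hroot⟩ := exists_pos_le_norm_of_aeval_eq_zero hf0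
  have hvert : ∀ j, 0 < ‖f.coeff (x j)‖ := fun j => by
    rw [hf.norm_coeff_eq]; exact Real.rpow_pos_of_pos (zero_lt_one.trans one_lt_natCast_prime) _
  refine Set.infinite_of_injective_eventually_mem hG ?_
  filter_upwards [eventually_gt_atTop 0, hb.eventually (gt_mem_nhds hc₀),
    hc.eventually (eventually_all.mpr fun j =>
      eventually_forall_norm_coeff_taylor_sub_lt f (hvert j))] with d hd hbd htaylor
  have hcd : ‖(p : ℚ_[p]) ^ (d + 1)‖ ≤ 1 := by
    rw [norm_pow]; exact pow_le_one₀ (norm_nonneg _) Padic.norm_p_lt_one.le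
  refine ⟨norm_coeff_X_pow_add_C_le_one hd hcd, irreducible_X_pow_add_C_p_pow_succ hd,
    ⟨fun j => d * x j, y, ?_⟩,
    fun K _ _ α => lt_norm_of_aeval_comp_X_pow_add_C_eq_zero (hroot K) hbd⟩
  rw [comp_X_pow_add_C_eq_expand_taylor]
  exact (hf.of_norm_sub_lt (natDegree_taylor _ _) htaylor).expand hd
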